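/- arXiv:2105.12772 — 5 statements merged into one kernel-verified Lean document; each statement's English description precedes it below -/
import Mathlib

section
/- Suppose 1 → ℤ/n → Γₙ → Γ → 1 is a central exact sequence with n ≥ 2 and Γₙ residually finite. Then there exists a finite index subgroup Γ' ≤ Γ admitting a section to Γₙ; in particular, Γₙ has a finite index subgroup isomorphic to a finite index subgroup of Γ. -/
/-- A group is residually finite if every nontrivial element survives in some
finite quotient. -/
def ResiduallyFinite (G : Type*) [Group G] : Prop :=
  ∀ g : G, g ≠ 1 → ∃ (F : Type) (_ : Group F) (_ : Finite F) (ρ : G →* F), ρ g ≠ 1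

/-- If `1 → ℤ/n → Γₙ → Γ → 1` is a central exact sequence with `n ≥ 2` and `Γₙ`
residually finite, then there is a finite index subgroup `Γ' ≤ Γ` admitting a
section to `Γₙ`; in particular `Γₙ` has a finite index subgroup (the image of the
section) isomorphic to the finite index subgroup `Γ'` of `Γ`. -/
theorem section_of_central_extension_of_residuallyFinite
    (n : ℕ) (hn : 2 ≤ n) (Γn Γ : Type*) [Group Γn] [Group Γ]
    (π : Γn →* Γ) (hπ : Function.Surjective π)
    (ι : Multiplicative (ZMod n) →* Γn) (hι : Function.Injective ι)
    (hker : ι.range = π.ker) (hcent : ι.range ≤ Subgroup.center Γn)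
    (hRF : ResiduallyFinite Γn) :
    ∃ Γ' : Subgroup Γ, Γ'.FiniteIndex ∧ ∃ s : Γ' →* Γn,
      (∀ x : Γ', π (s x) = (x : Γ)) ∧ s.range.FiniteIndex ∧ Nonempty (Γ' ≃* s.range) := by
  haveI : NeZero n := ⟨by omega⟩
  -- For each nontrivial a, a finite quotient detecting ι a
  have key : ∀ a : {a : Multiplicative (ZMod n) // a ≠ 1},
      ∃ (F : Type) (_ : Group F) (_ : Finite F) (ρ : Γn →* F), ρ (ι a.1) ≠ 1 := by
    intro a
    refine hRF (ι a.1) fun h => a.2 (hι (h.trans (map_one ι).symm))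
  choose F instG instF ρ hρ using key
  letI : ∀ a, Group (F a) := instG
  letI : ∀ a, Finite (F a) := instF
  -- the combined map
  let ρbig : Γn →* ∀ a, F a :=
    { toFun := fun x a => ρ a x
      map_one' := by funext a; simp
      map_mul' := by intro x y; funext a; simp }
  let H : Subgroup Γn := ρbig.ker
  haveI : Finite (∀ a, F a) := by infer_instance
  haveI hHfi : H.FiniteIndex := Subgroup.finiteIndex_ker ρbig
  -- H meets ι.range trivially
  have hmeet : ∀ x : Γn, x ∈ H → x ∈ ι.range → x = 1 := by
    rintro x hx ⟨a, rfl⟩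
    by_cases ha : a = 1
    · simp [ha]
    · exfalso
      have := congrFun (show ρbig (ι a) = 1 from hx) ⟨a, ha⟩
      exact hρ ⟨a, ha⟩ this
  -- π is injective on H
  have hinj : Function.Injective (π.comp H.subtype) := by
    intro x y hxy
    have hk : (x : Γn) * (y : Γn)⁻¹ ∈ π.ker := by
      simp only [MonoidHom.mem_ker, map_mul, map_inv]
      exact mul_inv_eq_one.mpr hxy
    have hH : (x : Γn) * (y : Γn)⁻¹ ∈ H := mul_mem x.2 (inv_mem y.2)
    have := hmeet _ hH (hker ▸ hk)
    have : (x : Γn) = y := by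
      have := mul_inv_eq_one.mp this
      exact this
    exact Subtype.ext this
  let e : H ≃* (π.comp H.subtype).range := MonoidHom.ofInjective hinj
  refine ⟨(π.comp H.subtype).range, ?_, ?_⟩
  · -- finite index
    have hrange : (π.comp H.subtype).range = H.map π := by
      rw [MonoidHom.range_comp, Subgroup.range_subtype]
    rw [hrange]
    constructor
    have hdvd := Subgroup.index_map_dvd (H := H) hπ
    intro h0
    rw [h0] at hdvd
    exact hHfi.index_ne_zero (Nat.eq_zero_of_zero_dvd hdvd)
  · refine ⟨H.subtype.comp e.symm.toMonoidHom, ?_, ?_, ?_⟩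
    · intro x
      have h1 := congrArg (Subtype.val) (e.apply_symm_apply x)
      rw [MonoidHom.ofInjective_apply hinj] at h1
      simpa using h1
    · have hr : (H.subtype.comp e.symm.toMonoidHom).range = H := by
        rw [MonoidHom.range_comp]
        have : e.symm.toMonoidHom.range = ⊤ :=
          MonoidHom.range_eq_top_of_surjective _ e.symm.surjective
        rw [this, ← MonoidHom.range_eq_map, Subgroup.range_subtype]
      rw [hr]; exact hHfi
    · refine ⟨e.symm.trans (MulEquiv.subgroupCongr ?_)⟩
      rw [MonoidHom.range_comp]
      have : e.symm.toMonoidHom.range = ⊤ :=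
        MonoidHom.range_eq_top_of_surjective _ e.symm.surjective
      rw [this, ← MonoidHom.range_eq_map, Subgroup.range_subtype]
end

section
/- Suppose Γ is residually finite, 1 → Z → Γ̃ → Γ → 1 is a group extension, and there is a homomorphism ρ : Γ̃ → H onto a residually finite group H such that the restriction of ρ to Z is injective. Then Γ̃ is residually finite. -/
/-- If `Γ` is residually finite, `1 → Z → Γ̃ → Γ → 1` is an extension (so `Z = ker π`),
and `ρ : Γ̃ → H` is a surjection onto a residually finite group `H` whose restriction
to `Z` is injective, then `Γ̃` is residually finite. -/
theorem residuallyFinite_of_extension (Γt Γ H : Type*) [Group Γt] [Group Γ] [Group H]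
    (π : Γt →* Γ) (hπ : Function.Surjective π) (hΓ : ResiduallyFinite Γ)
    (ρ : Γt →* H) (hρ : Function.Surjective ρ) (hH : ResiduallyFinite H)
    (hinj : ∀ z ∈ π.ker, ρ z = 1 → z = 1) :
    ResiduallyFinite Γt := by
  intro g hg
  by_cases hpg : π g = 1
  · have hρg : ρ g ≠ 1 := fun h => hg (hinj g hpg h)
    obtain ⟨F, _, _, φ, hφ⟩ := hH (ρ g) hρg
    exact ⟨F, ‹_›, ‹_›, φ.comp ρ, hφ⟩
  · obtain ⟨F, _, _, φ, hφ⟩ := hΓ (π g) hpg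
    exact ⟨F, ‹_›, ‹_›, φ.comp π, hφ⟩
end

section
/- Every finitely generated nilpotent group is residually finite. -/
open Subgroup
open scoped commutatorElement

section

variable {G : Type*} [Group G]

theorem Subgroup.normal_of_le_center {H : Subgroup G} (hH : H ≤ center G) : H.Normal where
  conj_mem n hn g := by rwa [mem_center_iff.mp (hH hn) g, mul_inv_cancel_right]

theorem IsOfFinOrder.of_mem_zpowers_of_ne_one {w x : G} (hx : IsOfFinOrder x)
    (hxw : x ∈ zpowers w) (hx1 : x ≠ 1) : IsOfFinOrder w := by
  obtain ⟨a, rfl⟩ := mem_zpowers_iff.mp hxw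
  obtain ⟨m, hm, hxm⟩ := isOfFinOrder_iff_zpow_eq_one.mp hx
  have ha : a ≠ 0 := by rintro rfl; exact hx1 (zpow_zero w)
  exact isOfFinOrder_iff_zpow_eq_one.mpr ⟨a * m, mul_ne_zero ha hm, by rw [zpow_mul, hxm]⟩

theorem commutatorElement_pow_right_of_commute {g x : G} (h : Commute ⁅g, x⁆ x) (n : ℕ) :
    ⁅g, x ^ n⁆ = ⁅g, x⁆ ^ n := by
  have hconj : g * x * g⁻¹ = ⁅g, x⁆ * x := by simp [commutatorElement_def]
  rw [commutatorElement_def, ← conj_pow, hconj, h.mul_pow, mul_inv_cancel_right]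

theorem exists_pow_mem_center_of_commutatorElement_mem_center [Group.FG G]
    (hZ : IsMulTorsion (center G)) {x : G} (hx : ∀ g : G, ⁅g, x⁆ ∈ center G) :
    ∃ n, 0 < n ∧ x ^ n ∈ center G := by
  obtain ⟨S, hS⟩ := Group.FG.out (G := G)
  have hfin (g : G) : IsOfFinOrder ⁅g, x⁆ := Submonoid.isOfFinOrder_coe.2 (hZ ⟨_, hx g⟩)
  refine ⟨∏ s ∈ S, orderOf ⁅s, x⁆, Finset.prod_pos fun s _ => (hfin s).orderOf_pos, ?_⟩
  rw [← centralizer_univ, ← coe_top, ← hS, centralizer_closure,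
    mem_centralizer_iff_commutator_eq_one]
  intro s hs
  rw [commutatorElement_pow_right_of_commute ((mem_center_iff.mp (hx s) x).symm),
    orderOf_dvd_iff_pow_eq_one.mp (Finset.dvd_prod_of_mem (fun s => orderOf ⁅s, x⁆) hs)]

theorem isMulTorsion_center_quotient_center [Group.FG G] (hZ : IsMulTorsion (center G)) :
    IsMulTorsion (center (G ⧸ center G)) := by
  rintro ⟨q, hq⟩
  obtain ⟨x, rfl⟩ := QuotientGroup.mk_surjective q
  have hx : x ∈ (center G).upperCentralSeriesStep := by
    rwa [Subgroup.upperCentralSeriesStep_eq_comap_center]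
  obtain ⟨n, hn, hxn⟩ := exists_pow_mem_center_of_commutatorElement_mem_center hZ fun g => by
    rw [← commutatorElement_inv]
    exact inv_mem (hx g)
  refine isOfFinOrder_iff_pow_eq_one.mpr ⟨n, hn, Subtype.ext ?_⟩
  simpa [← QuotientGroup.mk_pow] using hxn

open scoped IsMulCommutative in
theorem finite_of_isMulTorsion_center [Group.IsNilpotent G] [Group.FG G]
    (hZ : IsMulTorsion (center G)) : Finite G := by
  revert hZ
  refine Group.nilpotent_center_quotient_ind
    (P := fun G _ _ => ∀ [Group.FG G], IsMulTorsion (center G) → Finite G) G ?_ ?_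
  · intro G _ _ _ _
    exact Finite.of_subsingleton
  · intro G _ _ ih _ hZ
    have : Finite (G ⧸ center G) := ih (isMulTorsion_center_quotient_center hZ)
    have : (center G).FiniteIndex := finiteIndex_of_finite_quotient
    have : Finite (center G) := CommGroup.finite_of_fg_isMulTorsion _ hZ
    exact Finite.of_subgroup_quotient (center G)

theorem isMulTorsion_center_of_forall_normal_ne_bot_mem {x : G} (hx : x ≠ 1)
    (h : ∀ H : Subgroup G, H.Normal → H ≠ ⊥ → x ∈ H) : IsMulTorsion (center G) := by
  have hzpowers {w : G} (hw : w ∈ center G) (hw1 : w ≠ 1) : x ∈ zpowers w :=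
    h _ (normal_of_le_center (zpowers_le.mpr hw)) (zpowers_ne_bot.mpr hw1)
  rintro ⟨w, hw⟩
  rcases eq_or_ne w 1 with rfl | hw1
  · exact IsOfFinOrder.one
  have hxc : x ∈ center G := zpowers_le.mpr hw (hzpowers hw hw1)
  -- otherwise `zpowers (x ^ 2)` would be a nontrivial normal subgroup missing `x`
  have hxfin : IsOfFinOrder x := by
    by_contra hinf
    have hx2 : x ^ 2 ≠ 1 := fun h2 => hinf (isOfFinOrder_iff_pow_eq_one.mpr ⟨2, two_pos, h2⟩)
    obtain ⟨b, hb⟩ := mem_zpowers_iff.mp (hzpowers (pow_mem hxc 2) hx2)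
    have h2b : 2 * b = 1 := injective_zpow_iff_not_isOfFinOrder.mpr hinf
      (show x ^ (2 * b) = x ^ (1 : ℤ) by rw [zpow_one, zpow_mul, zpow_two, ← sq, hb])
    omega
  exact Submonoid.isOfFinOrder_coe.mp (hxfin.of_mem_zpowers_of_ne_one (hzpowers hw hw1) hx)

theorem exists_maximal_normal_notMem {g : G} (hg : g ≠ 1) :
    ∃ N : Subgroup G, Maximal (fun N : Subgroup G => N.Normal ∧ g ∉ N) N := by
  refine (zorn_le_nonempty₀ {N : Subgroup G | N.Normal ∧ g ∉ N} ?_ ⊥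
    ⟨inferInstance, by simpa using hg⟩).imp fun N hN => hN.2
  intro c hc hchain H hH
  refine ⟨sSup c, ⟨sSup_normal c fun K hK => (hc hK).1, fun hgc => ?_⟩, fun _ => le_sSup⟩
  obtain ⟨K, hK, hgK⟩ := (mem_sSup_of_directedOn ⟨H, hH⟩ hchain.directedOn).mp hgc
  exact (hc hK).2 hgK

theorem mk_mem_of_maximal_normal_notMem {g : G} {N : Subgroup G} [N.Normal]
    (hN : Maximal (fun N : Subgroup G => N.Normal ∧ g ∉ N) N) (H : Subgroup (G ⧸ N))
    (hH : H.Normal) (hH1 : H ≠ ⊥) : (g : G ⧸ N) ∈ H := by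
  by_contra hgH
  have hle : N ≤ H.comap (QuotientGroup.mk' N) := fun n hn => by
    simp [(QuotientGroup.eq_one_iff n).mpr hn]
  have hge : H.comap (QuotientGroup.mk' N) ≤ N := hN.2 ⟨hH.comap _, hgH⟩ hle
  refine hH1 (eq_bot_iff_forall _ |>.mpr fun q hq => ?_)
  obtain ⟨y, rfl⟩ := QuotientGroup.mk_surjective q
  exact (QuotientGroup.eq_one_iff y).mpr (hge hq)

theorem ResiduallyFinite.of_group_residuallyFinite [Group.ResiduallyFinite G] :
    ResiduallyFinite G := by
  intro g hg
  obtain ⟨H, hgH⟩ := Group.exists_finiteIndexNormalSubgroup_notMem g hg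
  -- the finite quotient must be moved to `Type`, where `ResiduallyFinite` looks for it
  obtain ⟨F, _, _, ⟨e⟩⟩ :=
    Finite.exists_type_univ_nonempty_mulEquiv.{_, 0} (G ⧸ H.toSubgroup)
  refine ⟨F, _, inferInstance, e.toMonoidHom.comp (QuotientGroup.mk' _), ?_⟩
  simpa using FiniteIndexNormalSubgroup.mem_toSubgroup_iff.not.mpr hgH

instance Group.residuallyFinite_of_fg_of_isNilpotent [Group.FG G] [Group.IsNilpotent G] :
    Group.ResiduallyFinite G := by
  refine Group.residuallyFinite_iff_exists_finiteIndex.mpr fun g hg => ?_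
  obtain ⟨N, hN⟩ := exists_maximal_normal_notMem hg
  obtain ⟨_, hgN⟩ := hN.prop
  have hg' : (g : G ⧸ N) ≠ 1 := by simpa using hgN
  have : Finite (G ⧸ N) := finite_of_isMulTorsion_center <|
    isMulTorsion_center_of_forall_normal_ne_bot_mem hg' (mk_mem_of_maximal_normal_notMem hN)
  exact ⟨N, finiteIndex_of_finite_quotient, hgN⟩

end

/-- Every finitely generated nilpotent group is residually finite. -/
theorem residuallyFinite_of_fg_nilpotent (G : Type*) [Group G] [Group.FG G]
    [Group.IsNilpotent G] : ResiduallyFinite G :=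
  .of_group_residuallyFinite
end

section
/- Let G be a group, g ∈ G an element such that the quotient map G → G/⟨⟨g⟩⟩ to the quotient by the normal closure factors as G → H → G/⟨⟨g⟩⟩ with G → H surjective; if the kernel of G → H is contained in a central cyclic subgroup ⟨z⟩ that maps isomorphically onto the corresponding central subgroup of H, then G ≅ H. (Abstract form of: a group presented by lifted generators and relations plus 'z central' is isomorphic to the lifted lattice Γ̃.) -/
/-- Abstract form of the presentation lemma: if `f : L ↠ G̃` is a surjection whose
composition with `q : G̃ → G` has kernel exactly the central cyclic subgroup `⟨z⟩`
of `L`, and `f` maps `⟨z⟩` isomorphically (injectively, with image the kernel of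
`q`, the corresponding central subgroup of `G̃`), then `f` is an isomorphism,
so `L ≅ G̃`. -/
theorem bijective_of_lifted_presentation (L Gt G : Type*) [Group L] [Group Gt] [Group G]
    (f : L →* Gt) (hf : Function.Surjective f)
    (q : Gt →* G) (z : L) (hz : z ∈ Subgroup.center L)
    (hker : (q.comp f).ker = Subgroup.zpowers z)
    (hinj : Set.InjOn f (Subgroup.zpowers z))
    (himg : Subgroup.map f (Subgroup.zpowers z) = q.ker) :
    Function.Bijective f ∧ Nonempty (L ≃* Gt) := by
  have hinjf : Function.Injective f := by
    rw [← MonoidHom.ker_eq_bot_iff, Subgroup.eq_bot_iff_forall]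
    intro x hx
    have hx1 : f x = 1 := hx
    have hxz : x ∈ Subgroup.zpowers z := by
      rw [← hker]
      simp [MonoidHom.mem_ker, hx1]
    have h1z : (1 : L) ∈ Subgroup.zpowers z := Subgroup.one_mem _
    exact hinj hxz h1z (by simp [hx1])
  exact ⟨⟨hinjf, hf⟩, ⟨MulEquiv.ofBijective f ⟨hinjf, hf⟩⟩⟩
end

section
/- Let 1 → ℤ/d → Γ_d → Γ → 1 be a central exact sequence with d ≥ 2. If Γ_d is residually finite then Γ_d is virtually isomorphic to Γ: there exist finite index subgroups Λ ≤ Γ and Λ' ≤ Γ_d with Λ ≅ Λ', where Λ' is the image of a section s : Λ → Γ_d of the projection. -/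
namespace ResiduallyFinite

variable {G : Type*} [Group G]

theorem exists_finiteIndex_notMem (hG : ResiduallyFinite G) {g : G} (hg : g ≠ 1) :
    ∃ N : Subgroup G, N.FiniteIndex ∧ g ∉ N := by
  obtain ⟨F, _, _, ρ, hρ⟩ := hG g hg
  exact ⟨ρ.ker, inferInstance, hρ⟩

theorem exists_finiteIndex_disjoint (hG : ResiduallyFinite G) (K : Subgroup G) [Finite K] :
    ∃ N : Subgroup G, N.FiniteIndex ∧ Disjoint N K := by
  choose N hN hkN using fun k : {k : K // k ≠ 1} =>
    hG.exists_finiteIndex_notMem (g := k.1) (by simpa using k.2)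
  refine ⟨⨅ k, N k, Subgroup.finiteIndex_iInf hN, Subgroup.disjoint_def.mpr ?_⟩
  intro g hgN hgK
  by_contra hg
  exact hkN ⟨⟨g, hgK⟩, by simpa using hg⟩ (Subgroup.mem_iInf.mp hgN _)

end ResiduallyFinite

namespace Subgroup

variable {G H : Type*} [Group G] [Group H]

theorem finiteIndex_map_of_surjective {f : G →* H} (hf : Function.Surjective f)
    (N : Subgroup G) [N.FiniteIndex] : (N.map f).FiniteIndex :=
  ⟨fun h => N.index_ne_zero_of_finite (Nat.eq_zero_of_zero_dvd (h ▸ N.index_map_dvd hf))⟩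

noncomputable def equivMapOfDisjointKer (N : Subgroup G) {f : G →* H}
    (hN : Disjoint N f.ker) : N ≃* N.map f :=
  have hinj : Function.Injective (f.domRestrict N) := by
    rw [← MonoidHom.ker_eq_bot_iff, MonoidHom.ker_domRestrict, subgroupOf_eq_bot]
    exact hN.symm
  (MonoidHom.ofInjective hinj).trans (MulEquiv.subgroupCongr (f.domRestrict_range N))

end Subgroup

namespace MonoidHom

variable {G H : Type*} [Group G] [Group H]

theorem injective_of_apply_eq_coe {f : G →* H} {Λ : Subgroup H} {s : Λ →* G}
    (hs : ∀ x : Λ, f (s x) = x) : Function.Injective s :=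
  fun x y hxy => Subtype.ext (by rw [← hs x, ← hs y, hxy])

theorem exists_section_of_disjoint_ker {f : G →* H} (hf : Function.Surjective f)
    (N : Subgroup G) [N.FiniteIndex] (hN : Disjoint N f.ker) :
    ∃ Λ : Subgroup H, Λ.FiniteIndex ∧ ∃ s : Λ →* G,
      (∀ x : Λ, f (s x) = x) ∧ s.range.FiniteIndex := by
  let e := N.equivMapOfDisjointKer hN
  let s : N.map f →* G := N.subtype.comp e.symm.toMonoidHom
  have hs : ∀ x, f (s x) = x := fun x => congrArg Subtype.val (e.apply_symm_apply x)
  have hNs : N ≤ s.range := fun x hx => ⟨e ⟨x, hx⟩, by simp [s]⟩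
  exact ⟨N.map f, N.finiteIndex_map_of_surjective hf, s, hs, Subgroup.finiteIndex_of_le hNs⟩

end MonoidHom

theorem virtually_isomorphic_of_residuallyFinite_central_extension_general
    (d : ℕ) (hd : 2 ≤ d) (Γd Γ : Type*) [Group Γd] [Group Γ]
    (π : Γd →* Γ) (hπ : Function.Surjective π)
    (ι : Multiplicative (ZMod d) →* Γd)
    (hker : ι.range = π.ker)
    (hRF : ResiduallyFinite Γd) :
    ∃ Λ : Subgroup Γ, Λ.FiniteIndex ∧ ∃ s : Λ →* Γd,
      (∀ x : Λ, π (s x) = (x : Γ)) ∧ s.range.FiniteIndex ∧ Nonempty (Λ ≃* s.range) := by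
  have : NeZero d := ⟨by omega⟩
  have : Finite (Multiplicative (ZMod d)) := inferInstanceAs (Finite (ZMod d))
  have : Finite π.ker := hker ▸ Finite.of_surjective _ ι.rangeRestrict_surjective
  obtain ⟨N, hN, hNker⟩ := hRF.exists_finiteIndex_disjoint π.ker
  obtain ⟨Λ, hΛ, s, hs, hsN⟩ := π.exists_section_of_disjoint_ker hπ N hNker
  exact ⟨Λ, hΛ, s, hs, hsN, ⟨MonoidHom.ofInjective (MonoidHom.injective_of_apply_eq_coe hs)⟩⟩

/-- Let `1 → ℤ/d → Γ_d → Γ → 1` be a central exact sequence with `d ≥ 2`.  If `Γ_d`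
is residually finite, then `Γ_d` is virtually isomorphic to `Γ`: there is a finite
index subgroup `Λ ≤ Γ` and a section `s : Λ → Γ_d` of the projection whose image
`Λ' = s(Λ)` is a finite index subgroup of `Γ_d` isomorphic to `Λ`. -/
theorem virtually_isomorphic_of_residuallyFinite_central_extension
    (d : ℕ) (hd : 2 ≤ d) (Γd Γ : Type*) [Group Γd] [Group Γ]
    (π : Γd →* Γ) (hπ : Function.Surjective π)
    (ι : Multiplicative (ZMod d) →* Γd) (hι : Function.Injective ι)
    (hker : ι.range = π.ker) (hcent : ι.range ≤ Subgroup.center Γd)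
    (hRF : ResiduallyFinite Γd) :
    ∃ Λ : Subgroup Γ, Λ.FiniteIndex ∧ ∃ s : Λ →* Γd,
      (∀ x : Λ, π (s x) = (x : Γ)) ∧ s.range.FiniteIndex ∧ Nonempty (Λ ≃* s.range) :=
  virtually_isomorphic_of_residuallyFinite_central_extension_general d hd Γd Γ π hπ ι hker hRF
end
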